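/- Let T be a tree, i.e., a simple graph (on a possibly infinite vertex set) that is connected and acyclic, and let a group Γ act on T by graph automorphisms. Suppose g ∈ Γ has finite order and acts on T without edge inversions, meaning there is no pair of adjacent vertices u, v of T with g • u = v and g • v = u. Then there exists a vertex p of T such that g • p = p. -/

import Mathlib

/-!
Choose a vertex `v` of minimal displacement `d(v, g • v)` and a geodesic `p` from `v` to `g • v`.
If `g` maps the second vertex of `p` to its penultimate one, then either `p` is a single edge
inverted by `g`, or the second vertex of `p` is displaced by at most `d(v, g • v) - 2`.
Otherwise consecutive translates `p, g • p, g² • p, …` meet without backtracking, so in a tree their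
concatenation is a path from `v` to `gⁿ • v`; hence no power of `g` fixes `v`, although `g` has
finite order.
-/

namespace SimpleGraph

variable {V : Type*} {G : SimpleGraph V} {u v w : V}

namespace Walk

lemma Nil.snd_eq {p : G.Walk u v} (hp : p.Nil) : p.snd = u := by
  cases hp; rfl

lemma not_nil_of_apply_snd_ne_penultimate {f : V → V} {p : G.Walk v (f v)}
    (h : f p.snd ≠ p.penultimate) : ¬p.Nil := fun hp ↦ by
  rw [hp.eq_copy_nil] at h
  simp [← hp.eq] at h

lemma snd_append {p : G.Walk u v} (hp : ¬p.Nil) (q : G.Walk v w) :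
    (p.append q).snd = p.snd := by
  have := not_nil_iff_lt_length.mp hp
  rw [snd, getVert_append]
  split_ifs with h
  · rfl
  · have h1 : p.length = 1 := by omega
    rw [h1, Nat.sub_self, getVert_zero, snd, ← h1, getVert_length]

lemma penultimate_append (p : G.Walk u v) {q : G.Walk v w} (hq : ¬q.Nil) :
    (p.append q).penultimate = q.penultimate := by
  have := not_nil_iff_lt_length.mp hq
  rw [penultimate, getVert_append, length_append, if_neg (by omega)]
  congr 1
  omega

lemma penultimate_map {V' : Type*} {G' : SimpleGraph V'} (f : G →g G') (p : G.Walk u v) :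
    (p.map f).penultimate = f p.penultimate := by
  rw [penultimate, getVert_map, length_map]

lemma dist_snd_penultimate_add_two_le {p : G.Walk u v} (hp : 2 ≤ p.length) :
    G.dist p.snd p.penultimate + 2 ≤ p.length := by
  have hpen : p.tail.penultimate = p.penultimate := by
    rw [penultimate, getVert_tail, length_tail]
    congr 1
    omega
  have := G.dist_le (p.tail.dropLast.copy rfl hpen)
  rw [length_copy, length_dropLast, length_tail] at this
  omega

end Walk

theorem IsAcyclic.isPath_append (hG : G.IsAcyclic) {p : G.Walk u v} {q : G.Walk v w}
    (hp : p.IsPath) (hq : q.IsPath) (h : p.penultimate ≠ q.snd) : (p.append q).IsPath := by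
  rw [hG.isPath_iff_isChain, Walk.edges_append, List.isChain_append]
  refine ⟨(hG.isPath_iff_isChain p).1 hp, (hG.isPath_iff_isChain q).1 hq, ?_⟩
  intro x hx y hy hxy
  obtain ⟨hpe, rfl⟩ := List.mem_getLast?_eq_getLast hx
  rw [← List.head_of_mem_head? hy, Walk.getLast_edges_eq_mk_penultimate_end,
    Walk.head_edges_eq_mk_start_snd, Sym2.eq_iff] at hxy
  have hpn : ¬p.Nil := mt Walk.edges_eq_nil.mpr hpe
  exact hxy.elim (fun h' ↦ (p.adj_penultimate hpn).ne h'.1) fun h' ↦ h h'.1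

variable {f : G →g G}

/-- `q` is the concatenation of `p, f p, …, f^[k] p`; the hypothesis `hback` says exactly that
consecutive pieces do not backtrack where they meet. -/
theorem IsAcyclic.exists_isPath_iterate (hG : G.IsAcyclic) (hf : Function.Injective f)
    {p : G.Walk v (f v)} (hp : p.IsPath) (hback : f p.snd ≠ p.penultimate) (k : ℕ) :
    ∃ q : G.Walk v (f^[k + 1] v),
      q.IsPath ∧ q.snd = p.snd ∧ q.penultimate = f^[k] p.penultimate := by
  have hpn := Walk.not_nil_of_apply_snd_ne_penultimate hback
  induction k with
  | zero => exact ⟨p, hp, rfl, rfl⟩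
  | succ k ih =>
    obtain ⟨q, hq, hsnd, hpen⟩ := ih
    have hqn : ¬(q.map f).Nil := by
      rw [Walk.nil_map_iff]
      exact fun hn ↦ (p.adj_snd hpn).ne' (hsnd ▸ hn.snd_eq)
    refine ⟨(p.append (q.map f)).copy rfl (Function.iterate_succ_apply' f (k + 1) v).symm,
      ?_, ?_, ?_⟩
    · rw [Walk.isPath_copy]
      refine hG.isPath_append hp (hq.map hf) ?_
      simp only [Walk.snd, Walk.getVert_map] at hsnd ⊢
      rw [hsnd]
      exact hback.symm
    · simp only [Walk.snd, Walk.getVert_copy]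
      exact Walk.snd_append hpn _
    · simp only [Walk.penultimate, Walk.getVert_copy, Walk.length_copy]
      rw [← Walk.penultimate, Walk.penultimate_append _ hqn, Walk.penultimate_map, hpen,
        Function.iterate_succ_apply']

theorem IsAcyclic.iterate_succ_apply_ne_self (hG : G.IsAcyclic) (hf : Function.Injective f)
    {p : G.Walk v (f v)} (hp : p.IsPath) (hback : f p.snd ≠ p.penultimate) (k : ℕ) :
    f^[k + 1] v ≠ v := by
  intro hk
  obtain ⟨q, hq, hsnd, -⟩ := hG.exists_isPath_iterate hf hp hback k
  have hnil : (q.copy rfl hk).Nil := Walk.isPath_iff_nil.mp ((Walk.isPath_copy _ _ _).mpr hq)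
  have hv := hnil.snd_eq
  simp only [Walk.snd, Walk.getVert_copy] at hv
  exact (p.adj_snd (Walk.not_nil_of_apply_snd_ne_penultimate hback)).ne' (hsnd ▸ hv)

end SimpleGraph

open SimpleGraph

/-- If a group element `g` of finite order acts on a tree `T`
(by graph automorphisms) without edge inversions, then `g` fixes some vertex. -/
theorem finite_order_no_inversion_has_fixed_vertex
    {V : Type*} {Γ : Type*} [Group Γ] [MulAction Γ V]
    (T : SimpleGraph V) (hT : T.IsTree)
    (hact : ∀ (h : Γ) (u v : V), T.Adj u v → T.Adj (h • u) (h • v))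
    (g : Γ) (hg : IsOfFinOrder g)
    (hnoinv : ¬ ∃ u v : V, T.Adj u v ∧ g • u = v ∧ g • v = u) :
    ∃ p : V, g • p = p := by
  have : Nonempty V := hT.connected.nonempty
  obtain ⟨v, hv⟩ : ∃ v, ∀ w, T.dist v (g • v) ≤ T.dist w (g • w) :=
    ⟨_, fun w ↦ Function.argmin_le (fun w ↦ T.dist w (g • w)) w⟩
  obtain ⟨p, hp, hlen⟩ := hT.connected.exists_path_of_dist v (g • v)
  by_contra! hfix
  have hpn : ¬p.Nil := fun hn ↦ hfix v hn.eq.symm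
  by_cases hback : g • p.snd = p.penultimate
  · have hpos := Walk.not_nil_iff_lt_length.mp hpn
    obtain hp1 | hp2 : p.length = 1 ∨ 2 ≤ p.length := by omega
    · have hsnd : p.snd = g • v := by
        simp only [Walk.snd, ← hp1, Walk.getVert_length]
      have hpen : p.penultimate = v := by
        simp only [Walk.penultimate, hp1, Nat.sub_self, Walk.getVert_zero]
      refine hnoinv ⟨v, g • v, hsnd ▸ p.adj_snd hpn, rfl, ?_⟩
      rw [← hsnd, hback, hpen]
    · have hshort := p.dist_snd_penultimate_add_two_le hp2
      have hmin := hv p.snd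
      rw [hback] at hmin
      omega
  · let f : T →g T := ⟨(g • ·), hact g _ _⟩
    obtain ⟨n, hn, hgn⟩ := hg.exists_pow_eq_one
    apply hT.isAcyclic.iterate_succ_apply_ne_self (f := f) (MulAction.injective g) hp hback (n - 1)
    simp [f, smul_iterate_apply, Nat.sub_add_cancel hn, hgn]
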